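/- Let (X,⪯,G) be a G-complete partially ordered G-metric space and let T : X → X be a map that is non-decreasing with respect to ⪯, satisfies x₀ ⪯ T x₀ for some x₀ ∈ X, is either G-continuous or defined on a regular non-decreasing space, and satisfies: there exist ψ ∈ Ψ and φ ∈ Φ such that for all x, y ∈ X with x ⪯ y, ψ(G(Tx,Ty,T²x)) ≤ ψ(N(x,y)) − φ(N(x,y)), where N(x,y) = max{G(x,Tx,y), G(Tx,T²x,T²x), (1/2)[G(x,Tx,Tx) + G(y,Ty,Ty)], (1/2)[G(x,T²x,Ty) + G(Tx,Tx,y)]}. Suppose in addition that for any two fixed points x, y of T there exists z ∈ X such that x ⪯ z, y ⪯ z, and the sequence (Tᵐ z)_{m∈ℕ} G-converges in X. Then T has a unique fixed point. -/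
import Mathlib


open Filter Topology Set

/-- A G-metric on a set `X`, valued in `ℝ` (with values in `[0,∞)`). -/
structure IsGMetric {X : Type*} (G : X → X → X → ℝ) : Prop where
  nonneg : ∀ x y z, 0 ≤ G x y z
  /-- (G1) -/
  eq_zero_of_eq : ∀ x, G x x x = 0
  /-- (G2) -/
  pos_of_ne : ∀ x y, x ≠ y → 0 < G x x y
  /-- (G3) -/
  le_of_ne : ∀ x y z, y ≠ z → G x x y ≤ G x y z
  /-- (G4): invariance under permutations (generated by these two transpositions) -/
  swap_left : ∀ x y z, G x y z = G y x z
  swap_right : ∀ x y z, G x y z = G x z y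
  /-- (G5) rectangle inequality -/
  rect : ∀ x y z a, G x y z ≤ G x a a + G a y z

/-- A sequence `s` G-converges to `x` iff `G x (s n) (s n) → 0`. -/
def GConvergesTo {X : Type*} (G : X → X → X → ℝ) (s : ℕ → X) (x : X) : Prop :=
  Tendsto (fun n => G x (s n) (s n)) atTop (𝓝 0)

/-- A sequence is G-Cauchy. -/
def GCauchy {X : Type*} (G : X → X → X → ℝ) (s : ℕ → X) : Prop :=
  ∀ ε > (0 : ℝ), ∃ N : ℕ, ∀ n ≥ N, ∀ m ≥ N, ∀ l ≥ N, G (s n) (s m) (s l) < ε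

/-- `(X, G)` is G-complete. -/
def GComplete {X : Type*} (G : X → X → X → ℝ) : Prop :=
  ∀ s : ℕ → X, GCauchy G s → ∃ x, GConvergesTo G s x

/-- `T` is G-continuous. -/
def GContinuousMap {X : Type*} (G : X → X → X → ℝ) (T : X → X) : Prop :=
  ∀ (s : ℕ → X) (x : X), GConvergesTo G s x → GConvergesTo G (fun n => T (s n)) (T x)

/-- `(X, ⪯, G)` is regular non-decreasing. -/
def RegularNondecreasing {X : Type*} [PartialOrder X] (G : X → X → X → ℝ) : Prop :=
  ∀ (s : ℕ → X) (x : X), Monotone s → GConvergesTo G s x → ∀ n, s n ≤ x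

/-- Membership in the class `Ψ`: continuous, non-decreasing, nonnegative on `[0,∞)`
and vanishing exactly at `0`. -/
def MemPsi (ψ : ℝ → ℝ) : Prop :=
  ContinuousOn ψ (Ici 0) ∧ MonotoneOn ψ (Ici 0) ∧
    (∀ t ≥ (0 : ℝ), 0 ≤ ψ t) ∧ (∀ t ≥ (0 : ℝ), (ψ t = 0 ↔ t = 0))

/-- Membership in the class `Φ`: lower semicontinuous, nonnegative on `[0,∞)`
and vanishing exactly at `0`. -/
def MemPhi (φ : ℝ → ℝ) : Prop :=
  LowerSemicontinuousOn φ (Ici 0) ∧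
    (∀ t ≥ (0 : ℝ), 0 ≤ φ t) ∧ (∀ t ≥ (0 : ℝ), (φ t = 0 ↔ t = 0))

/-- The quantity `M(x,y,z)` associated with `G` and `T`. -/
noncomputable def Mfun {X : Type*} (G : X → X → X → ℝ) (T : X → X) (x y z : X) : ℝ :=
  max (G x (T x) y) (max (G x (T x) z) (max (G x y z) (max (G y (T y) (T y))
    (max (G z (T z) (T z)) ((G x (T y) (T z) + G (T x) y z) / 2)))))

/-- The quantity `N(x,y)` associated with `G` and `T`. -/
noncomputable def Nfun {X : Type*} (G : X → X → X → ℝ) (T : X → X) (x y : X) : ℝ :=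
  max (G x (T x) y) (max (G (T x) (T (T x)) (T (T x)))
    (max ((G x (T x) (T x) + G y (T y) (T y)) / 2)
      ((G x (T (T x)) (T y) + G (T x) (T x) y) / 2)))

section Toolkit
variable {X : Type*} {G : X → X → X → ℝ}

lemma IsGMetric.rot (hG : IsGMetric G) (x y z : X) : G x y z = G y z x := by
  rw [hG.swap_left, hG.swap_right]

lemma IsGMetric.rot2 (hG : IsGMetric G) (x y z : X) : G x y z = G z x y := by
  rw [hG.rot, hG.rot]

lemma IsGMetric.dbl (hG : IsGMetric G) (x y : X) : G x x y ≤ 2 * G x y y := by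
  have h1 := hG.rect x x y y
  have h2 := hG.rot y x y
  linarith

lemma IsGMetric.eq_of_zero (hG : IsGMetric G) {x y : X} (h : G x y y = 0) : x = y := by
  by_contra hne
  have h1 := hG.pos_of_ne x y hne
  have h2 := hG.dbl x y
  linarith

lemma IsGMetric.eq_of_zero' (hG : IsGMetric G) {x y : X} (h : G x x y = 0) : x = y := by
  by_contra hne
  have h1 := hG.pos_of_ne x y hne
  linarith

lemma IsGMetric.tri (hG : IsGMetric G) (x y z : X) : G x z z ≤ G x y y + G y z z :=
  hG.rect x z z y

lemma IsGMetric.gconv_unique (hG : IsGMetric G) {s : ℕ → X} {a b : X}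
    (ha : GConvergesTo G s a) (hb : GConvergesTo G s b) : a = b := by
  apply hG.eq_of_zero (y := b)
  have key : ∀ n, G a b b ≤ G a (s n) (s n) + 2 * G b (s n) (s n) := by
    intro n
    have h1 := hG.rect a b b (s n)
    have h2 : G (s n) b b = G b b (s n) := hG.rot (s n) b b
    have h3 := hG.dbl b (s n)
    linarith
  have hle : G a b b ≤ 0 := by
    have := le_of_tendsto_of_tendsto (tendsto_const_nhds (x := G a b b))
      (by simpa using ha.add (hb.const_mul 2)) (Eventually.of_forall key)
    simpa using this
  have := hG.nonneg a b b
  linarith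

end Toolkit

/-- key ψ-φ limit lemma -/
lemma aux_key {ψ φ : ℝ → ℝ} (hψ : MemPsi ψ) (hφ : MemPhi φ) {u v : ℕ → ℝ}
    (hu0 : ∀ n, 0 ≤ u n) (hv0 : ∀ n, 0 ≤ v n) {L₁ L₂ : ℝ}
    (hu : Tendsto u atTop (𝓝 L₁)) (hv : Tendsto v atTop (𝓝 L₂))
    (hc : ∀ᶠ n in atTop, ψ (u n) ≤ ψ (v n) - φ (v n)) :
    ψ L₁ ≤ ψ L₂ - φ L₂ / 2 := by
  have hL₁ : (0:ℝ) ≤ L₁ := ge_of_tendsto' hu hu0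
  have hL₂ : (0:ℝ) ≤ L₂ := ge_of_tendsto' hv hv0
  have hu' : Tendsto u atTop (𝓝[Ici (0:ℝ)] L₁) :=
    tendsto_nhdsWithin_iff.2 ⟨hu, Eventually.of_forall hu0⟩
  have hv' : Tendsto v atTop (𝓝[Ici (0:ℝ)] L₂) :=
    tendsto_nhdsWithin_iff.2 ⟨hv, Eventually.of_forall hv0⟩
  have hpsiu : Tendsto (fun n => ψ (u n)) atTop (𝓝 (ψ L₁)) :=
    (hψ.1 L₁ hL₁).tendsto.comp hu'
  have hpsiv : Tendsto (fun n => ψ (v n)) atTop (𝓝 (ψ L₂)) :=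
    (hψ.1 L₂ hL₂).tendsto.comp hv'
  rcases le_or_gt (φ L₂) 0 with h0 | h0
  · have : φ L₂ = 0 := le_antisymm h0 (hφ.2.1 L₂ hL₂)
    rw [this]
    have : ψ L₁ ≤ ψ L₂ := by
      refine le_of_tendsto_of_tendsto hpsiu hpsiv ?_
      filter_upwards [hc] with n hn
      have := hφ.2.1 (v n) (hv0 n)
      linarith
    linarith
  · have hev : ∀ᶠ n in atTop, φ L₂ / 2 < φ (v n) := hv' (hφ.1 L₂ hL₂ _ (by linarith))
    refine le_of_tendsto_of_tendsto hpsiu (hpsiv.sub_const (φ L₂ / 2)) ?_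
    filter_upwards [hc, hev] with n h1 h2
    linarith

lemma aux_key₀ {ψ φ : ℝ → ℝ} (hψ : MemPsi ψ) (hφ : MemPhi φ) {u v : ℕ → ℝ}
    (hu0 : ∀ n, 0 ≤ u n) (hv0 : ∀ n, 0 ≤ v n) {L : ℝ}
    (hu : Tendsto u atTop (𝓝 L)) (hv : Tendsto v atTop (𝓝 L))
    (hc : ∀ᶠ n in atTop, ψ (u n) ≤ ψ (v n) - φ (v n)) : L = 0 := by
  have h := aux_key hψ hφ hu0 hv0 hu hv hc
  have hL : (0:ℝ) ≤ L := ge_of_tendsto' hv hv0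
  have h1 := hφ.2.1 L hL
  have : φ L = 0 := by linarith
  exact (hφ.2.2 L hL).1 this
section Orbit
variable {X : Type*} [PartialOrder X] {G : X → X → X → ℝ} {T : X → X} {ψ φ : ℝ → ℝ}

lemma aux_a (hG : IsGMetric G) (hψ : MemPsi ψ) (hφ : MemPhi φ)
    (hcontr : ∀ x y : X, x ≤ y →
      ψ (G (T x) (T y) (T (T x))) ≤ ψ (Nfun G T x y) - φ (Nfun G T x y))
    {x : ℕ → X} (hx : ∀ n, x (n+1) = T (x n)) (hmono : Monotone x) :
    Tendsto (fun n => G (x n) (x (n+1)) (x (n+1))) atTop (𝓝 0) := by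
  set a : ℕ → ℝ := fun n => G (x n) (x (n+1)) (x (n+1)) with ha_def
  have ht1 : ∀ n, T (x n) = x (n+1) := fun n => (hx n).symm
  have ht2 : ∀ n, T (T (x n)) = x (n+2) := by
    intro n; rw [ht1 n]; exact ht1 (n+1)
  have hNeq : ∀ n, Nfun G T (x n) (x (n+1)) =
      max (a n) (max (a (n+1)) (max ((a n + a (n+1))/2)
        ((G (x n) (x (n+2)) (x (n+2)) + 0)/2))) := by
    intro n
    rw [Nfun, ht2 n, ht1 n, ht1 (n+1), hG.eq_zero_of_eq (x (n+1))]
  have ha0 : ∀ n, 0 ≤ a n := fun n => hG.nonneg _ _ _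
  have hNle : ∀ n, Nfun G T (x n) (x (n+1)) ≤ max (a n) (a (n+1)) := by
    intro n
    rw [hNeq n]
    have h1 := hG.tri (x n) (x (n+1)) (x (n+2))
    have h2 : a n ≤ max (a n) (a (n+1)) := le_max_left _ _
    have h3 : a (n+1) ≤ max (a n) (a (n+1)) := le_max_right _ _
    refine max_le h2 (max_le h3 (max_le (by linarith) (by
      have : G (x n) (x (n+2)) (x (n+2)) ≤ a n + a (n+1) := h1
      linarith)))
  have hNge1 : ∀ n, a n ≤ Nfun G T (x n) (x (n+1)) := by
    intro n; rw [hNeq n]; exact le_max_left _ _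
  have hNge2 : ∀ n, a (n+1) ≤ Nfun G T (x n) (x (n+1)) := by
    intro n; rw [hNeq n]; exact le_trans (le_max_left _ _) (le_max_right _ _)
  have hcontr' : ∀ n, ψ (a (n+1)) ≤ ψ (Nfun G T (x n) (x (n+1)))
      - φ (Nfun G T (x n) (x (n+1))) := by
    intro n
    have h := hcontr (x n) (x (n+1)) (hmono (Nat.le_succ n))
    rw [ht2 n, ht1 n, ht1 (n+1)] at h
    exact h
  have hanti : ∀ n, a (n+1) ≤ a n := by
    intro n
    by_contra hlt
    push_neg at hlt
    have hNeqa : Nfun G T (x n) (x (n+1)) = a (n+1) :=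
      le_antisymm (le_trans (hNle n) (max_le (le_of_lt hlt) le_rfl)) (hNge2 n)
    have h := hcontr' n
    rw [hNeqa] at h
    have hpos : 0 < φ (a (n+1)) := by
      have h1 := hφ.2.1 (a (n+1)) (ha0 (n+1))
      have h2 := (hφ.2.2 (a (n+1)) (ha0 (n+1)))
      rcases eq_or_lt_of_le h1 with he | hl
      · exfalso
        have := h2.1 he.symm
        have := ha0 n
        linarith
      · exact hl
    linarith
  have hAnti : Antitone a := antitone_nat_of_succ_le hanti
  have hbdd : BddBelow (range a) := ⟨0, fun t ⟨n, hn⟩ => hn ▸ ha0 n⟩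
  have hL : Tendsto a atTop (𝓝 (⨅ n, a n)) := tendsto_atTop_ciInf hAnti hbdd
  have hNeqan : ∀ n, Nfun G T (x n) (x (n+1)) = a n := by
    intro n
    exact le_antisymm (le_trans (hNle n) (max_le le_rfl (hanti n))) (hNge1 n)
  have hL0 : (⨅ n, a n) = 0 := by
    refine aux_key₀ hψ hφ (fun n => ha0 (n+1)) ha0
      (hL.comp (tendsto_add_atTop_nat 1)) hL ?_
    filter_upwards with n
    have h := hcontr' n
    rw [hNeqan n] at h
    exact h
  rw [← hL0]
  exact hL

end Orbit
section Cauchy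
variable {X : Type*} [PartialOrder X] {G : X → X → X → ℝ} {T : X → X} {ψ φ : ℝ → ℝ}

lemma aux_cauchy (hG : IsGMetric G) (hψ : MemPsi ψ) (hφ : MemPhi φ)
    (hcontr : ∀ x y : X, x ≤ y →
      ψ (G (T x) (T y) (T (T x))) ≤ ψ (Nfun G T x y) - φ (Nfun G T x y))
    {x : ℕ → X} (hx : ∀ n, x (n+1) = T (x n)) (hmono : Monotone x)
    (hne : ∀ n, x n ≠ x (n+1)) :
    GCauchy G x := by
  classical
  have ht1 : ∀ n, T (x n) = x (n+1) := fun n => (hx n).symm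
  have ht2 : ∀ n, T (T (x n)) = x (n+2) := by
    intro n; rw [ht1 n]; exact ht1 (n+1)
  set a : ℕ → ℝ := fun n => G (x n) (x (n+1)) (x (n+1)) with ha_def
  have ha0 : ∀ n, 0 ≤ a n := fun n => hG.nonneg _ _ _
  have haT : Tendsto a atTop (𝓝 0) := aux_a hG hψ hφ hcontr hx hmono
  -- dbl in the convenient form
  have hdbl : ∀ n, G (x (n+1)) (x n) (x n) ≤ 2 * a n := by
    intro n
    have h1 : G (x (n+1)) (x n) (x n) = G (x n) (x n) (x (n+1)) := hG.rot _ _ _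
    have h2 := hG.dbl (x n) (x (n+1))
    rw [h1]; exact h2
  -- main criterion
  have crit : ∀ ε : ℝ, 0 < ε → ∃ N, ∀ p q, N ≤ p → p < q →
      G (x p) (x q) (x q) < ε := by
    by_contra hcon
    push_neg at hcon
    obtain ⟨ε, hε, H⟩ := hcon
    choose n m' hn hlt' hge' using H
    have hex : ∀ k, ∃ j, n k < j ∧ ε ≤ G (x (n k)) (x j) (x j) :=
      fun k => ⟨m' k, hlt' k, hge' k⟩
    set m : ℕ → ℕ := fun k => Nat.find (hex k) with hm_def
    have hm1 : ∀ k, n k < m k ∧ ε ≤ G (x (n k)) (x (m k)) (x (m k)) :=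
      fun k => Nat.find_spec (hex k)
    set M : ℕ → ℕ := fun k => m k - 1 with hM_def
    have hMk : ∀ k, M k = m k - 1 := fun k => rfl
    have hmM : ∀ k, m k = M k + 1 := by
      intro k; have h := (hm1 k).1; have h2 := hMk k; omega
    have hnM : ∀ k, n k ≤ M k := by
      intro k; have h := (hm1 k).1; have h2 := hMk k; omega
    have hcm1_lt : ∀ k, G (x (n k)) (x (M k)) (x (M k)) < ε := by
      intro k
      rcases eq_or_lt_of_le (hnM k) with he | hl
      · rw [← he, hG.eq_zero_of_eq]; exact hε
      · by_contra hge2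
        push_neg at hge2
        have h2 := hMk k
        have h3 := (hm1 k).1
        have hmin := Nat.find_min (hex k) (show M k < m k by omega)
        exact hmin ⟨hl, hge2⟩
    -- lower bound: ε - a (M k) ≤ cm1 k
    have hcm1_ge : ∀ k, ε - a (M k) ≤ G (x (n k)) (x (M k)) (x (M k)) := by
      intro k
      have h1 := (hm1 k).2
      rw [hmM k] at h1
      have h2 := hG.tri (x (n k)) (x (M k)) (x (M k + 1))
      simp only [ha_def]
      linarith
    -- helper: for all v, G v (x q) (x (q+1)) ≤ G v (x q) (x q) + 2 a q
    have Hmix : ∀ k v, G v (x (M k)) (x (M k + 1)) ≤ G v (x (M k)) (x (M k)) + 2 * a (M k) := by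
      intro k v
      have h1 := hG.rect v (x (M k)) (x (M k + 1)) (x (M k))
      have h2 := hG.dbl (x (M k)) (x (M k + 1))
      simp only [ha_def]
      linarith
    have Hq : ∀ k v, G v v (x (M k)) ≤ G v (x (M k)) (x (M k)) + 2 * a (M k) := by
      intro k v
      have h1 := hG.le_of_ne v (x (M k)) (x (M k + 1)) (hne (M k))
      exact le_trans h1 (Hmix k v)
    have Hq1 : ∀ k v, G v v (x (M k + 1)) ≤ G v (x (M k)) (x (M k)) + 2 * a (M k) := by
      intro k v
      have h1 := hG.le_of_ne v (x (M k + 1)) (x (M k)) (Ne.symm (hne (M k)))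
      have h2 : G v (x (M k + 1)) (x (M k)) = G v (x (M k)) (x (M k + 1)) :=
        hG.swap_right _ _ _
      rw [h2] at h1
      exact le_trans h1 (Hmix k v)
    -- base bounds
    have Hb1 : ∀ k, G (x (n k + 1)) (x (M k)) (x (M k)) ≤
        2 * a (n k) + G (x (n k)) (x (M k)) (x (M k)) := by
      intro k
      have h1 := hG.tri (x (n k + 1)) (x (n k)) (x (M k))
      have h2 := hdbl (n k)
      linarith
    -- u k : the contraction LHS
    set u : ℕ → ℝ := fun k => G (x (n k + 1)) (x (M k + 1)) (x (n k + 2)) with hu_def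
    have hu0 : ∀ k, 0 ≤ u k := fun k => hG.nonneg _ _ _
    -- lower bound for u
    have hu_ge : ∀ k, ε - a (n k) ≤ u k := by
      intro k
      -- ε ≤ G (x nk) (x (Mk+1)) (x (Mk+1)) ≤ a nk + G (x (nk+1)) (x (Mk+1)) (x (Mk+1))
      have h1 := (hm1 k).2
      rw [hmM k] at h1
      have h2 := hG.tri (x (n k)) (x (n k + 1)) (x (M k + 1))
      -- G (x (nk+1)) (x (Mk+1)) (x (Mk+1)) ≤ u k
      have h3 : G (x (M k + 1)) (x (M k + 1)) (x (n k + 1)) ≤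
          G (x (M k + 1)) (x (n k + 1)) (x (n k + 2)) :=
        hG.le_of_ne _ _ _ (hne (n k + 1))
      have h4 : G (x (M k + 1)) (x (M k + 1)) (x (n k + 1)) =
          G (x (n k + 1)) (x (M k + 1)) (x (M k + 1)) := hG.rot2 _ _ _
      have h5 : G (x (M k + 1)) (x (n k + 1)) (x (n k + 2)) =
          G (x (n k + 1)) (x (M k + 1)) (x (n k + 2)) := hG.swap_left _ _ _
      rw [h4, h5] at h3
      simp only [hu_def, ha_def]
      linarith
    -- upper bound for u
    have hu_le : ∀ k, u k ≤ G (x (n k)) (x (M k)) (x (M k))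
        + (2 * a (n k) + 2 * a (n k + 1) + 2 * a (M k)) := by
      intro k
      have h0 : u k = G (x (n k + 2)) (x (n k + 1)) (x (M k + 1)) := hG.rot2 _ _ _
      have h1 := hG.rect (x (n k + 2)) (x (n k + 1)) (x (M k + 1)) (x (n k + 1))
      have h2 : G (x (n k + 2)) (x (n k + 1)) (x (n k + 1)) ≤ 2 * a (n k + 1) :=
        hdbl (n k + 1)
      have h3 := Hq1 k (x (n k + 1))
      have h4 := Hb1 k
      simp only [hu_def] at h0 ⊢
      linarith
    -- Nfun components
    have hple : ∀ k, x (n k) ≤ x (M k) := fun k => hmono (hnM k)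
    set Nf : ℕ → ℝ := fun k => Nfun G T (x (n k)) (x (M k)) with hNf_def
    have hNf0 : ∀ k, 0 ≤ Nf k := by
      intro k
      simp only [hNf_def, Nfun]
      exact le_trans (hG.nonneg _ _ _) (le_max_left _ _)
    have hNfeq : ∀ k, Nf k = max (G (x (n k)) (x (n k + 1)) (x (M k)))
        (max (a (n k + 1)) (max ((a (n k) + a (M k))/2)
          ((G (x (n k)) (x (n k + 2)) (x (M k + 1))
            + G (x (n k + 1)) (x (n k + 1)) (x (M k)))/2))) := by
      intro k
      simp only [hNf_def, Nfun, ht2, ht1, ha_def]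
    -- lower bound for Nf
    have hNf_ge : ∀ k, ε - a (M k) ≤ Nf k := by
      intro k
      have h1 : G (x (M k)) (x (M k)) (x (n k)) ≤
          G (x (M k)) (x (n k)) (x (n k + 1)) := hG.le_of_ne _ _ _ (hne (n k))
      have h2 : G (x (M k)) (x (M k)) (x (n k)) =
          G (x (n k)) (x (M k)) (x (M k)) := hG.rot2 _ _ _
      have h3 : G (x (M k)) (x (n k)) (x (n k + 1)) =
          G (x (n k)) (x (n k + 1)) (x (M k)) := hG.rot _ _ _
      rw [h2, h3] at h1
      have h4 := hcm1_ge k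
      have h5 : G (x (n k)) (x (n k + 1)) (x (M k)) ≤ Nf k := by
        rw [hNfeq k]; exact le_max_left _ _
      linarith
    -- upper bound for Nf
    set B : ℕ → ℝ := fun k => max (G (x (n k)) (x (M k)) (x (M k))
        + (2 * a (n k) + 2 * a (n k + 1) + 4 * a (M k)))
        (max (a (n k + 1)) ((a (n k) + a (M k))/2)) with hB_def
    have hNf_le : ∀ k, Nf k ≤ B k := by
      intro k
      rw [hNfeq k]
      set cm1 := G (x (n k)) (x (M k)) (x (M k)) with hcm1_def
      have hcomp1 : G (x (n k)) (x (n k + 1)) (x (M k)) ≤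
          cm1 + (2 * a (n k) + 2 * a (n k + 1) + 4 * a (M k)) := by
        have h0 : G (x (n k)) (x (n k + 1)) (x (M k)) =
            G (x (n k + 1)) (x (n k)) (x (M k)) := hG.swap_left _ _ _
        have h1 := hG.rect (x (n k + 1)) (x (n k)) (x (M k)) (x (n k))
        have h2 := hdbl (n k)
        have h3 := Hq k (x (n k))
        have h4 := ha0 (n k + 1)
        have h5 := ha0 (M k)
        rw [h0]
        linarith
      have hcomp4a : G (x (n k)) (x (n k + 2)) (x (M k + 1)) ≤
          cm1 + (2 * a (n k) + 2 * a (n k + 1) + 4 * a (M k)) := by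
        have h0 : G (x (n k)) (x (n k + 2)) (x (M k + 1)) =
            G (x (n k + 2)) (x (n k)) (x (M k + 1)) := hG.swap_left _ _ _
        have h1 := hG.rect (x (n k + 2)) (x (n k)) (x (M k + 1)) (x (n k))
        have h2 : G (x (n k + 2)) (x (n k)) (x (n k)) ≤ 2 * (a (n k) + a (n k + 1)) := by
          have ha1 : G (x (n k + 2)) (x (n k)) (x (n k)) =
              G (x (n k)) (x (n k)) (x (n k + 2)) := hG.rot _ _ _
          have ha2 := hG.dbl (x (n k)) (x (n k + 2))
          have ha3 := hG.tri (x (n k)) (x (n k + 1)) (x (n k + 2))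
          simp only [ha_def]
          rw [ha1]
          linarith
        have h3 := Hq1 k (x (n k))
        have h5 := ha0 (M k)
        rw [h0]
        linarith
      have hcomp4b : G (x (n k + 1)) (x (n k + 1)) (x (M k)) ≤
          cm1 + (2 * a (n k) + 2 * a (n k + 1) + 4 * a (M k)) := by
        have h1 := Hq k (x (n k + 1))
        have h2 := Hb1 k
        have h4 := ha0 (n k + 1)
        have h5 := ha0 (M k)
        linarith
      refine max_le (le_trans hcomp1 (le_max_left _ _)) (max_le ?_ (max_le ?_ ?_))
      · exact le_trans (le_max_left _ _) (le_max_right _ _)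
      · exact le_trans (le_max_right _ _) (le_max_right _ _)
      · refine le_trans ?_ (le_max_left _ _)
        linarith
    -- limits
    have htop_n : Tendsto n atTop atTop := tendsto_atTop_mono hn tendsto_id
    have htop_n1 : Tendsto (fun k => n k + 1) atTop atTop :=
      tendsto_atTop_mono (fun k => le_trans (hn k) (Nat.le_succ _)) tendsto_id
    have htop_M : Tendsto M atTop atTop :=
      tendsto_atTop_mono (fun k => le_trans (hn k) (hnM k)) tendsto_id
    have haN : Tendsto (fun k => a (n k)) atTop (𝓝 0) := haT.comp htop_n
    have haN1 : Tendsto (fun k => a (n k + 1)) atTop (𝓝 0) := haT.comp htop_n1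
    have haM : Tendsto (fun k => a (M k)) atTop (𝓝 0) := haT.comp htop_M
    have hcm1T : Tendsto (fun k => G (x (n k)) (x (M k)) (x (M k))) atTop (𝓝 ε) := by
      refine tendsto_of_tendsto_of_tendsto_of_le_of_le
        (g := fun k => ε - a (M k)) (h := fun _ => ε) ?_ tendsto_const_nhds
        (fun k => hcm1_ge k) (fun k => le_of_lt (hcm1_lt k))
      simpa using tendsto_const_nhds.sub haM
    have huT : Tendsto u atTop (𝓝 ε) := by
      refine tendsto_of_tendsto_of_tendsto_of_le_of_le
        (g := fun k => ε - a (n k))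
        (h := fun k => G (x (n k)) (x (M k)) (x (M k))
          + (2 * a (n k) + 2 * a (n k + 1) + 2 * a (M k))) ?_ ?_ hu_ge hu_le
      · simpa using tendsto_const_nhds.sub haN
      · have : Tendsto (fun k => 2 * a (n k) + 2 * a (n k + 1) + 2 * a (M k))
            atTop (𝓝 0) := by
          have := ((haN.const_mul 2).add (haN1.const_mul 2)).add (haM.const_mul 2)
          simpa using this
        simpa using hcm1T.add this
    have hBT : Tendsto B atTop (𝓝 ε) := by
      have h1 : Tendsto (fun k => G (x (n k)) (x (M k)) (x (M k))
          + (2 * a (n k) + 2 * a (n k + 1) + 4 * a (M k))) atTop (𝓝 ε) := by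
        have : Tendsto (fun k => 2 * a (n k) + 2 * a (n k + 1) + 4 * a (M k))
            atTop (𝓝 0) := by
          have := ((haN.const_mul 2).add (haN1.const_mul 2)).add (haM.const_mul 4)
          simpa using this
        simpa using hcm1T.add this
      have h2 : Tendsto (fun k => (a (n k) + a (M k))/2) atTop (𝓝 0) := by
        have := (haN.add haM).div_const 2
        simpa using this
      have h3 := h1.max (haN1.max h2)
      have h4 : max ε (max 0 0) = ε := by
        rw [max_self, max_eq_left hε.le]
      rw [h4] at h3
      exact h3
    have hNfT : Tendsto Nf atTop (𝓝 ε) := by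
      refine tendsto_of_tendsto_of_tendsto_of_le_of_le
        (g := fun k => ε - a (M k)) (h := B) ?_ hBT hNf_ge hNf_le
      simpa using tendsto_const_nhds.sub haM
    -- contraction
    have hcon' : ∀ k, ψ (u k) ≤ ψ (Nf k) - φ (Nf k) := by
      intro k
      have h := hcontr (x (n k)) (x (M k)) (hple k)
      rw [ht2 (n k), ht1 (n k), ht1 (M k)] at h
      exact h
    have := aux_key₀ hψ hφ hu0 hNf0 huT hNfT (Eventually.of_forall hcon')
    exact absurd this (ne_of_gt hε)
  -- derive GCauchy from criterion
  intro ε hε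
  obtain ⟨N, hN⟩ := crit (ε/6) (by linarith)
  refine ⟨N, fun p hp q hq l hl => ?_⟩
  have pair : ∀ i j, N ≤ i → N ≤ j → G (x i) (x j) (x j) < ε/3 := by
    intro i j hi hj
    rcases lt_trichotomy i j with h | h | h
    · have := hN i j hi h; linarith
    · rw [h, hG.eq_zero_of_eq]; linarith
    · have h1 := hN j i hj h
      have h2 : G (x i) (x j) (x j) = G (x j) (x j) (x i) := hG.rot _ _ _
      have h3 := hG.dbl (x j) (x i)
      rw [h2]
      linarith
  have h1 := hG.rect (x p) (x q) (x l) (x q)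
  have h2 : G (x q) (x q) (x l) ≤ 2 * G (x q) (x l) (x l) := hG.dbl _ _
  have h3 := pair p q hp hq
  have h4 := pair q l hq hl
  linarith

end Cauchy
section Attract
variable {X : Type*} [PartialOrder X] {G : X → X → X → ℝ} {T : X → X} {ψ φ : ℝ → ℝ}

lemma aux_attract (hG : IsGMetric G) (hψ : MemPsi ψ) (hφ : MemPhi φ)
    (hcontr : ∀ x y : X, x ≤ y →
      ψ (G (T x) (T y) (T (T x))) ≤ ψ (Nfun G T x y) - φ (Nfun G T x y))
    (hTmono : Monotone T) {p z w : X} (hp : T p = p) (hpz : p ≤ z)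
    (hw : GConvergesTo G (fun m => T^[m] z) w) : p = w := by
  set zs : ℕ → X := fun m => T^[m] z with hzs
  have hz1 : ∀ m, zs (m+1) = T (zs m) := fun m => Function.iterate_succ_apply' T m z
  have hple : ∀ m, p ≤ zs m := by
    intro m
    induction m with
    | zero => exact hpz
    | succ k ih =>
      calc p = T p := hp.symm
        _ ≤ T (zs k) := hTmono ih
        _ = zs (k+1) := (hz1 k).symm
  set f : ℕ → ℝ := fun m => G w (zs m) (zs m) with hf
  have hfT : Tendsto f atTop (𝓝 0) := hw
  have hf0 : ∀ m, 0 ≤ f m := fun m => hG.nonneg _ _ _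
  set δ := G p p w with hδ
  have hδ0 : 0 ≤ δ := hG.nonneg _ _ _
  set q : ℕ → ℝ := fun m => G p p (zs m) with hq
  have hq0 : ∀ m, 0 ≤ q m := fun m => hG.nonneg _ _ _
  have hq_le : ∀ m, q m ≤ δ + 2 * f m := by
    intro m
    have h1 : G p p (zs m) = G (zs m) p p := hG.rot2 _ _ _
    have h2 := hG.rect (zs m) p p w
    have h3 : G (zs m) w w = G w w (zs m) := hG.rot _ _ _
    have h4 := hG.dbl w (zs m)
    have h5 : G w p p = G p p w := hG.rot _ _ _
    simp only [hq, hδ, hf]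
    rw [h1]
    linarith
  have hq_ge : ∀ m, δ - f m ≤ q m := by
    intro m
    have h1 : G p p w = G w p p := hG.rot2 _ _ _
    have h2 := hG.rect w p p (zs m)
    have h3 : G (zs m) p p = G p p (zs m) := hG.rot _ _ _
    simp only [hq, hδ, hf]
    linarith
  have hqT : Tendsto q atTop (𝓝 δ) := by
    refine tendsto_of_tendsto_of_tendsto_of_le_of_le
      (g := fun m => δ - f m) (h := fun m => δ + 2 * f m) ?_ ?_ hq_ge hq_le
    · simpa using tendsto_const_nhds.sub hfT
    · simpa using tendsto_const_nhds.add (hfT.const_mul 2)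
  set b : ℕ → ℝ := fun m => G (zs m) (zs (m+1)) (zs (m+1)) with hb
  have hb0 : ∀ m, 0 ≤ b m := fun m => hG.nonneg _ _ _
  have hb_le : ∀ m, b m ≤ 2 * f m + f (m+1) := by
    intro m
    have h1 := hG.tri (zs m) w (zs (m+1))
    have h2 : G (zs m) w w = G w w (zs m) := hG.rot _ _ _
    have h3 := hG.dbl w (zs m)
    simp only [hb, hf]
    linarith
  have hbT : Tendsto b atTop (𝓝 0) := by
    refine tendsto_of_tendsto_of_tendsto_of_le_of_le
      (g := fun _ => (0:ℝ)) (h := fun m => 2 * f m + f (m+1))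
      tendsto_const_nhds ?_ hb0 hb_le
    have := (hfT.const_mul 2).add (hfT.comp (tendsto_add_atTop_nat 1))
    simpa using this
  have htp : T (T p) = p := by rw [hp, hp]
  have hNeq : ∀ m, Nfun G T p (zs m) =
      max (q m) (max 0 (max ((0 + b m)/2) ((q (m+1) + q m)/2))) := by
    intro m
    simp only [Nfun, hp, htp, hz1, hq, hb, hG.eq_zero_of_eq p]
  have hNT : Tendsto (fun m => Nfun G T p (zs m)) atTop (𝓝 δ) := by
    have h1 : Tendsto (fun m => max (q m) (max 0 (max ((0 + b m)/2) ((q (m+1) + q m)/2))))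
        atTop (𝓝 (max δ (max 0 (max ((0 + 0)/2) ((δ + δ)/2))))) := by
      refine hqT.max (Tendsto.max tendsto_const_nhds (Tendsto.max ?_ ?_))
      · exact (tendsto_const_nhds.add hbT).div_const 2
      · exact ((hqT.comp (tendsto_add_atTop_nat 1)).add hqT).div_const 2
    have h2 : max δ (max 0 (max ((0 + 0)/2) ((δ + δ)/2))) = δ := by
      rw [show ((0:ℝ) + 0)/2 = 0 by norm_num, show (δ + δ)/2 = δ by ring,
        max_eq_right hδ0, max_eq_right hδ0, max_self]
    rw [h2] at h1
    simpa only [hNeq] using h1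
  have hN0 : ∀ m, 0 ≤ Nfun G T p (zs m) := by
    intro m
    exact le_trans (hG.nonneg _ _ _) (le_max_left _ _)
  have hcon' : ∀ m, ψ (q (m+1)) ≤ ψ (Nfun G T p (zs m)) - φ (Nfun G T p (zs m)) := by
    intro m
    have h := hcontr p (zs m) (hple m)
    rw [hp, hp] at h
    have h2 : G p (T (zs m)) p = G p p (T (zs m)) := hG.swap_right _ _ _
    rw [h2, ← hz1 m] at h
    exact h
  have hδeq : δ = 0 := by
    refine aux_key₀ hψ hφ (fun m => hq0 (m+1)) hN0
      (hqT.comp (tendsto_add_atTop_nat 1)) hNT (Eventually.of_forall hcon')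
  exact hG.eq_of_zero' hδeq

end Attract
section RegFix
variable {X : Type*} [PartialOrder X] {G : X → X → X → ℝ} {T : X → X} {ψ φ : ℝ → ℝ}

lemma aux_regfix (hG : IsGMetric G) (hψ : MemPsi ψ) (hφ : MemPhi φ)
    (hcontr : ∀ x y : X, x ≤ y →
      ψ (G (T x) (T y) (T (T x))) ≤ ψ (Nfun G T x y) - φ (Nfun G T x y))
    {x : ℕ → X} (hx : ∀ n, x (n+1) = T (x n))
    {xs : X} (hxs : GConvergesTo G x xs) (hlex : ∀ n, x n ≤ xs) :
    T xs = xs := by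
  by_contra hne'
  have ht1 : ∀ n, T (x n) = x (n+1) := fun n => (hx n).symm
  have ht2 : ∀ n, T (T (x n)) = x (n+2) := by
    intro n; rw [ht1 n]; exact ht1 (n+1)
  set y := T xs with hy
  have hyne : y ≠ xs := hne'
  set γ := G y xs xs with hγ
  set β := G xs y y with hβ
  have hγpos : 0 < γ := by
    have h1 := hG.pos_of_ne xs y (Ne.symm hyne)
    have h2 : G xs xs y = G y xs xs := hG.rot2 _ _ _
    rw [h2] at h1; exact h1
  have hβpos : 0 < β := by
    have h1 := hG.pos_of_ne y xs hyne
    have h2 : G y y xs = G xs y y := hG.rot2 _ _ _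
    rw [h2] at h1; exact h1
  have hβ2γ : β ≤ 2 * γ := by
    have h1 := hG.dbl y xs
    have h2 : G y y xs = G xs y y := hG.rot2 _ _ _
    rw [h2] at h1; exact h1
  set e : ℕ → ℝ := fun n => G xs (x n) (x n) with he
  have heT : Tendsto e atTop (𝓝 0) := hxs
  have he0 : ∀ n, 0 ≤ e n := fun n => hG.nonneg _ _ _
  have heT1 : Tendsto (fun n => e (n+1)) atTop (𝓝 0) := heT.comp (tendsto_add_atTop_nat 1)
  have heT2 : Tendsto (fun n => e (n+2)) atTop (𝓝 0) := heT.comp (tendsto_add_atTop_nat 2)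
  have hxse : ∀ n, G (x n) xs xs ≤ 2 * e n := by
    intro n
    have h1 : G (x n) xs xs = G xs xs (x n) := hG.rot _ _ _
    have h2 := hG.dbl xs (x n)
    rw [h1]; exact h2
  set a : ℕ → ℝ := fun n => G (x n) (x (n+1)) (x (n+1)) with ha
  have ha0 : ∀ n, 0 ≤ a n := fun n => hG.nonneg _ _ _
  have ha_le : ∀ n, a n ≤ 2 * e n + e (n+1) := by
    intro n
    have h1 := hG.tri (x n) xs (x (n+1))
    have h2 := hxse n
    simp only [ha, he]
    simp only [he] at h2
    linarith
  have haT : Tendsto a atTop (𝓝 0) := by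
    refine tendsto_of_tendsto_of_tendsto_of_le_of_le (g := fun _ => (0:ℝ))
      (h := fun n => 2 * e n + e (n+1)) tendsto_const_nhds ?_ ha0 ha_le
    simpa using (heT.const_mul 2).add heT1
  have haT1 : Tendsto (fun n => a (n+1)) atTop (𝓝 0) := haT.comp (tendsto_add_atTop_nat 1)
  have hyev : ∀ᶠ n in atTop, y ≠ x (n+2) := by
    have h1 : ∀ᶠ n in atTop, e (n+2) < β := heT2.eventually_lt_const hβpos
    filter_upwards [h1] with n hn
    intro heq
    simp only [he, hβ] at hn
    rw [← heq] at hn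
    exact lt_irrefl _ hn
  -- the contraction LHS
  set L : ℕ → ℝ := fun n => G (x (n+1)) y (x (n+2)) with hL
  have hL0 : ∀ n, 0 ≤ L n := fun n => hG.nonneg _ _ _
  have hL_le : ∀ n, L n ≤ γ + (e (n+1) + 2 * a (n+1)) := by
    intro n
    have h0 : G (x (n+1)) y (x (n+2)) = G y (x (n+1)) (x (n+2)) := hG.swap_left _ _ _
    have h1 := hG.rect y (x (n+1)) (x (n+2)) xs
    have h2 := hG.rect xs (x (n+1)) (x (n+2)) (x (n+1))
    have h3 := hG.dbl (x (n+1)) (x (n+2))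
    simp only [hL, he, ha, hγ]
    rw [h0]
    linarith
  have hL_ge : ∀ᶠ n in atTop, γ - 2 * e (n+1) ≤ L n := by
    filter_upwards [hyev] with n hny
    have h1 := hG.tri y (x (n+1)) xs
    have h2 := hxse (n+1)
    have h3 : G y (x (n+1)) (x (n+1)) = G (x (n+1)) (x (n+1)) y := hG.rot _ _ _
    have h4 := hG.le_of_ne (x (n+1)) y (x (n+2)) hny
    simp only [hL, he, hγ]
    simp only [he] at h2
    rw [h3] at h1
    linarith
  have hLT : Tendsto L atTop (𝓝 γ) := by
    refine tendsto_of_tendsto_of_tendsto_of_le_of_le'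
      (g := fun n => γ - 2 * e (n+1)) (h := fun n => γ + (e (n+1) + 2 * a (n+1)))
      ?_ ?_ hL_ge (Eventually.of_forall hL_le)
    · simpa using tendsto_const_nhds.sub (heT1.const_mul 2)
    · simpa using tendsto_const_nhds.add (heT1.add (haT1.const_mul 2))
  -- Nfun components
  set W : ℕ → ℝ := fun n => G (x n) (x (n+2)) y with hW
  set V : ℕ → ℝ := fun n => G (x (n+1)) (x (n+1)) xs with hV
  set I : ℕ → ℝ := fun n => G (x n) (x (n+1)) xs with hI
  have hNeq : ∀ n, Nfun G T (x n) xs =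
      max (I n) (max (a (n+1)) (max ((a n + β)/2) ((W n + V n)/2))) := by
    intro n
    simp only [Nfun, ht2, ht1, ← hy, hI, ha, hβ, hW, hV]
  have hI_le : ∀ n, I n ≤ 2 * e n + 2 * e (n+1) := by
    intro n
    have h1 := hG.rect (x n) (x (n+1)) xs xs
    have h2 := hxse n
    have h3 : G xs (x (n+1)) xs = G xs xs (x (n+1)) := hG.swap_right _ _ _
    have h4 := hG.dbl xs (x (n+1))
    simp only [hI, he]
    simp only [he] at h2
    rw [h3] at h1
    linarith
  have hIT : Tendsto I atTop (𝓝 0) := by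
    refine tendsto_of_tendsto_of_tendsto_of_le_of_le (g := fun _ => (0:ℝ))
      (h := fun n => 2 * e n + 2 * e (n+1)) tendsto_const_nhds ?_
      (fun n => hG.nonneg _ _ _) hI_le
    simpa using (heT.const_mul 2).add (heT1.const_mul 2)
  have hV_le : ∀ n, V n ≤ 4 * e (n+1) := by
    intro n
    have h1 := hG.dbl (x (n+1)) xs
    have h2 := hxse (n+1)
    simp only [hV, he]
    simp only [he] at h2
    linarith
  have hVT : Tendsto V atTop (𝓝 0) := by
    refine tendsto_of_tendsto_of_tendsto_of_le_of_le (g := fun _ => (0:ℝ))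
      (h := fun n => 4 * e (n+1)) tendsto_const_nhds ?_
      (fun n => hG.nonneg _ _ _) hV_le
    simpa using heT1.const_mul 4
  have hW_le : ∀ n, W n ≤ γ + (e n + 2 * (a n + a (n+1))) := by
    intro n
    have h0 : G (x n) (x (n+2)) y = G y (x n) (x (n+2)) := hG.rot2 _ _ _
    have h1 := hG.rect y (x n) (x (n+2)) xs
    have h2 := hG.rect xs (x n) (x (n+2)) (x n)
    have h3 := hG.dbl (x n) (x (n+2))
    have h4 := hG.tri (x n) (x (n+1)) (x (n+2))
    simp only [hW, he, ha, hγ]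
    rw [h0]
    linarith
  have hW_ge : ∀ᶠ n in atTop, γ - 2 * e n ≤ W n := by
    filter_upwards [hyev] with n hny
    have hny2 : y ≠ x (n+2) := hny
    have h1 := hG.tri y (x n) xs
    have h2 := hxse n
    have h3 : G y (x n) (x n) = G (x n) (x n) y := hG.rot _ _ _
    have h4 := hG.le_of_ne (x n) y (x (n+2)) hny2
    have h5 : G (x n) y (x (n+2)) = G (x n) (x (n+2)) y := hG.swap_right _ _ _
    simp only [hW, he, hγ]
    simp only [he] at h2
    rw [h3] at h1
    rw [h5] at h4
    linarith
  have hWT : Tendsto W atTop (𝓝 γ) := by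
    refine tendsto_of_tendsto_of_tendsto_of_le_of_le'
      (g := fun n => γ - 2 * e n) (h := fun n => γ + (e n + 2 * (a n + a (n+1))))
      ?_ ?_ hW_ge (Eventually.of_forall hW_le)
    · simpa using tendsto_const_nhds.sub (heT.const_mul 2)
    · simpa using tendsto_const_nhds.add (heT.add ((haT.add haT1).const_mul 2))
  set Mx : ℝ := max 0 (max 0 (max ((0 + β)/2) ((γ + 0)/2))) with hMx
  have hNT : Tendsto (fun n => Nfun G T (x n) xs) atTop (𝓝 Mx) := by
    have h1 : Tendsto (fun n => max (I n) (max (a (n+1)) (max ((a n + β)/2)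
        ((W n + V n)/2)))) atTop (𝓝 Mx) := by
      rw [hMx]
      exact hIT.max (haT1.max (((haT.add tendsto_const_nhds).div_const 2).max
        ((hWT.add hVT).div_const 2)))
    simpa only [hNeq] using h1
  have hN0 : ∀ n, 0 ≤ Nfun G T (x n) xs := by
    intro n
    exact le_trans (hG.nonneg _ _ _) (le_trans (le_max_left _ _) (by rw [hNeq n]))
  have hcon' : ∀ n, ψ (L n) ≤ ψ (Nfun G T (x n) xs) - φ (Nfun G T (x n) xs) := by
    intro n
    have h := hcontr (x n) xs (hlex n)
    rw [ht2 n, ht1 n, ← hy] at h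
    exact h
  have hkey := aux_key hψ hφ hL0 hN0 hLT hNT (Eventually.of_forall hcon')
  have hMpos : 0 < Mx := by
    have : (γ + 0)/2 ≤ Mx := by
      rw [hMx]
      exact le_trans (le_max_right _ _) (le_trans (le_max_right _ _) (le_max_right _ _))
    linarith
  have hMleγ : Mx ≤ γ := by
    rw [hMx]
    refine max_le hγpos.le (max_le hγpos.le (max_le (by linarith) (by linarith)))
  have hφM : 0 < φ Mx := by
    have h1 := hφ.2.1 Mx hMpos.le
    rcases eq_or_lt_of_le h1 with heq | hlt
    · exact absurd ((hφ.2.2 Mx hMpos.le).1 heq.symm) (ne_of_gt hMpos)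
    · exact hlt
  have hψM : ψ Mx ≤ ψ γ := hψ.2.1 hMpos.le (le_of_lt hγpos) hMleγ
  linarith

end RegFix
theorem stmt10 {X : Type*} [Nonempty X] [PartialOrder X] (G : X → X → X → ℝ)
    (hG : IsGMetric G) (hcomp : GComplete G) (T : X → X) (hTmono : Monotone T)
    (x₀ : X) (hx₀ : x₀ ≤ T x₀)
    (hcases : GContinuousMap G T ∨ RegularNondecreasing G)
    (ψ φ : ℝ → ℝ) (hψ : MemPsi ψ) (hφ : MemPhi φ)
    (hcontr : ∀ x y : X, x ≤ y →
      ψ (G (T x) (T y) (T (T x))) ≤ ψ (Nfun G T x y) - φ (Nfun G T x y))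
    (hdom : ∀ x y : X, T x = x → T y = y →
      ∃ z : X, x ≤ z ∧ y ≤ z ∧ ∃ w : X, GConvergesTo G (fun m => T^[m] z) w) :
    ∃! x : X, T x = x := by
  set x : ℕ → X := fun n => T^[n] x₀ with hxdef
  have hx : ∀ n, x (n+1) = T (x n) := fun n => Function.iterate_succ_apply' T n x₀
  have hmono : Monotone x := by
    refine monotone_nat_of_le_succ ?_
    intro n
    induction n with
    | zero =>
      have h0 : x 0 = x₀ := rfl
      have h1 : x 1 = T x₀ := by rw [hx 0, h0]
      rw [h0, h1]; exact hx₀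
    | succ k ih =>
      rw [hx k] at ih
      rw [hx (k+1), hx k]
      exact hTmono ih
  have hexists : ∃ p : X, T p = p := by
    by_cases hdeg : ∃ n, x n = x (n+1)
    · obtain ⟨n, hn⟩ := hdeg
      exact ⟨x n, (hx n).symm.trans hn.symm⟩
    · push_neg at hdeg
      have hcauchy := aux_cauchy hG hψ hφ hcontr hx hmono hdeg
      obtain ⟨xs, hxs⟩ := hcomp x hcauchy
      rcases hcases with hcontT | hreg
      · have h1 : GConvergesTo G (fun n => T (x n)) (T xs) := hcontT x xs hxs
        have h2 : GConvergesTo G (fun n => x (n+1)) xs := by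
          have := hxs.comp (tendsto_add_atTop_nat 1)
          exact this
        have h3 : GConvergesTo G (fun n => x (n+1)) (T xs) := by
          have heq : (fun n => T (x n)) = fun n => x (n+1) := by
            funext n; exact (hx n).symm
          rw [← heq]
          exact h1
        exact ⟨xs, hG.gconv_unique h3 h2⟩
      · have hlex : ∀ n, x n ≤ xs := hreg x xs hmono hxs
        exact ⟨xs, aux_regfix hG hψ hφ hcontr hx hxs hlex⟩
  obtain ⟨p, hp⟩ := hexists
  refine ⟨p, hp, ?_⟩
  intro q hq
  obtain ⟨z, hqz, hpz, w, hw⟩ := hdom q p hq hp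
  have h1 : p = w := aux_attract hG hψ hφ hcontr hTmono hp hpz hw
  have h2 : q = w := aux_attract hG hψ hφ hcontr hTmono hq hqz hw
  exact h2.trans h1.symm
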